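/- arXiv:2109.13132 — 2 statements merged into one kernel-verified Lean document; each statement's English description precedes it below -/
import Mathlib

section
/- Coercivity as ‖K‖ → ∞: with notation as in the SOF problem (Q, R, X₀ positive definite, C full row rank), if (K_i) ⊆ 𝕂 is a sequence of stabilizing gains with ‖K_i‖ → +∞, then J(K_i) → +∞. -/
open Matrix Filter Topology

/-- Spectral radius of a real square matrix (max modulus of complex eigenvalues). -/
noncomputable def specRad {n : ℕ} (A : Matrix (Fin n) (Fin n) ℝ) : ℝ :=
  sSup ((fun z : ℂ => ‖z‖) '' spectrum ℂ (A.map (algebraMap ℝ ℂ)))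

/-- Spectral (ℓ²-operator) norm of a real matrix. -/
noncomputable def specNorm {m n : ℕ} (A : Matrix (Fin m) (Fin n) ℝ) : ℝ :=
  ‖LinearMap.toContinuousLinearMap (Matrix.toEuclideanLin A)‖

/-- Frobenius norm. -/
noncomputable def frobNorm {m n : ℕ} (A : Matrix (Fin m) (Fin n) ℝ) : ℝ :=
  Real.sqrt ((Aᵀ * A).trace)

/-- Least singular value of a real matrix. -/
noncomputable def sigmaMin {m n : ℕ} (A : Matrix (Fin m) (Fin n) ℝ) : ℝ :=
  sInf ((fun v : EuclideanSpace ℝ (Fin m) => ‖Matrix.toEuclideanLin Aᵀ v‖) '' {v | ‖v‖ = 1})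

/-- Least (real) eigenvalue, as infimum of the real spectrum. -/
noncomputable def lambdaMin {n : ℕ} (Q : Matrix (Fin n) (Fin n) ℝ) : ℝ :=
  sInf (spectrum ℝ Q)


private lemma trace_nonneg_of_psd {k : ℕ} {P : Matrix (Fin k) (Fin k) ℝ}
    (hP : P.PosSemidef) : 0 ≤ P.trace := by
  rw [Matrix.trace]
  refine Finset.sum_nonneg fun i _ => ?_
  have := hP.dotProduct_mulVec_nonneg (Pi.single i 1)
  simpa [Matrix.mulVec_single, dotProduct_single] using this

private lemma trace_mul_psd_nonneg {k : ℕ} {P X : Matrix (Fin k) (Fin k) ℝ}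
    (hP : P.PosSemidef) (hX : X.PosSemidef) : 0 ≤ (P * X).trace := by
  have hs' : ∃ Y : Matrix (Fin k) (Fin k) ℝ, Y.PosSemidef ∧ Y * Y = X := by
    open scoped MatrixOrder in
    exact ⟨CFC.sqrt X, Matrix.nonneg_iff_posSemidef.mp (CFC.sqrt_nonneg X),
      CFC.sqrt_mul_sqrt_self X hX.nonneg⟩
  obtain ⟨Y, hs, hYY⟩ := hs'
  have h2 : (P * X).trace = (Y * P * Y).trace := by
    rw [show P * X = P * Y * Y by rw [mul_assoc, hYY],
      Matrix.trace_mul_comm, ← mul_assoc]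
  rw [h2]
  have hpsd : (Y * P * Yᴴ).PosSemidef := hP.mul_mul_conjTranspose_same Y
  rw [hs.isHermitian.eq] at hpsd
  exact trace_nonneg_of_psd hpsd

private lemma le_trace_mul' {k : ℕ} {P X : Matrix (Fin k) (Fin k) ℝ} {c : ℝ}
    (hP : P.PosSemidef) (hX : (X - c • 1).PosSemidef) :
    c * P.trace ≤ (P * X).trace := by
  have h := trace_mul_psd_nonneg hP hX
  have he : P * (X - c • (1 : Matrix (Fin k) (Fin k) ℝ)) = P * X - c • P := by
    rw [Matrix.mul_sub, Matrix.mul_smul, mul_one]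
  rw [he, Matrix.trace_sub, Matrix.trace_smul, smul_eq_mul] at h
  linarith

private lemma exists_pos_sub_smul_psd {k : ℕ} {M : Matrix (Fin k) (Fin k) ℝ}
    (hM : M.PosDef) : ∃ c : ℝ, 0 < c ∧ (M - c • 1).PosSemidef := by
  rcases Nat.eq_zero_or_pos k with hk | hk
  · subst hk
    refine ⟨1, one_pos, Subsingleton.elim _ _, fun x => ?_⟩
    simp [dotProduct, Subsingleton.elim x 0]
  · have hne : Nonempty (Fin k) := Fin.pos_iff_nonempty.mp hk
    have h := hM.isHermitian
    obtain ⟨i, -, hi⟩ := Finset.exists_mem_eq_inf' (Finset.univ_nonempty) h.eigenvalues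
    set c := Finset.univ.inf' Finset.univ_nonempty h.eigenvalues with hc
    refine ⟨c, by rw [hi]; exact hM.eigenvalues_pos i, ?_⟩
    set U : Matrix (Fin k) (Fin k) ℝ := (h.eigenvectorUnitary : Matrix (Fin k) (Fin k) ℝ) with hU
    have hUU : U * Uᴴ = 1 := by
      rw [← Matrix.star_eq_conjTranspose]
      exact Unitary.coe_mul_star_self _
    have key : M - c • 1 = U * Matrix.diagonal (fun j => h.eigenvalues j - c) * Uᴴ := by
      have hdiag : Matrix.diagonal (fun j => h.eigenvalues j - c)
          = Matrix.diagonal h.eigenvalues - c • 1 := by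
        rw [smul_one_eq_diagonal, Matrix.diagonal_sub]
      rw [hdiag, Matrix.mul_sub, Matrix.sub_mul]
      have h1 : U * (c • (1 : Matrix (Fin k) (Fin k) ℝ)) * Uᴴ = c • 1 := by
        rw [Matrix.mul_smul, mul_one, Matrix.smul_mul, hUU]
      rw [h1]
      congr 1
      have := h.spectral_theorem
      rw [Unitary.conjStarAlgAut_apply] at this
      rw [← Matrix.star_eq_conjTranspose]
      convert this using 3 <;> rfl
    rw [key]
    refine Matrix.PosSemidef.mul_mul_conjTranspose_same (Matrix.PosSemidef.diagonal ?_) U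
    intro j
    simp only [Pi.zero_apply, sub_nonneg]
    exact hc ▸ Finset.inf'_le _ (Finset.mem_univ j)

private lemma posDef_self_mul_transpose {d n : ℕ} {C : Matrix (Fin d) (Fin n) ℝ}
    (hC : C.rank = d) : (C * Cᵀ).PosDef := by
  have hpsd : (C * Cᵀ).PosSemidef := by
    have := Matrix.posSemidef_self_mul_conjTranspose C
    rwa [Matrix.conjTranspose_eq_transpose_of_trivial] at this
  have hrank : (C * Cᵀ).rank = d := by rw [Matrix.rank_self_mul_transpose, hC]
  have hsurj : Function.Surjective (C * Cᵀ).mulVecLin := by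
    rw [← LinearMap.range_eq_top]
    apply Submodule.eq_top_of_finrank_eq
    rw [show Module.finrank ℝ (LinearMap.range (C * Cᵀ).mulVecLin) = (C * Cᵀ).rank from rfl,
      hrank, Module.finrank_fin_fun]
  have hinj : Function.Injective (C * Cᵀ).mulVecLin :=
    (LinearMap.injective_iff_surjective).mpr hsurj
  refine Matrix.posDef_iff_dotProduct_mulVec.mpr ⟨hpsd.1, fun x hx => ?_⟩
  rcases lt_or_eq_of_le (hpsd.dotProduct_mulVec_nonneg x) with h | h
  · exact h
  · exfalso
    apply hx
    have h0 : (C * Cᵀ) *ᵥ x = 0 := (hpsd.dotProduct_mulVec_zero_iff x).mp h.symm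
    exact hinj (a₁ := x) (a₂ := 0) (by rw [Matrix.mulVecLin_apply, Matrix.mulVecLin_apply, h0, Matrix.mulVec_zero])

private lemma specNorm_sq_le_trace {m d : ℕ} (K : Matrix (Fin m) (Fin d) ℝ) :
    specNorm K ^ 2 ≤ (Kᵀ * K).trace := by
  have htr : (Kᵀ * K).trace = ∑ j, ∑ i, K i j ^ 2 := by
    simp [Matrix.trace, Matrix.mul_apply, Matrix.diag, pow_two]
  have htr_nonneg : 0 ≤ (Kᵀ * K).trace := by
    rw [htr]; positivity
  have hbound : specNorm K ≤ Real.sqrt ((Kᵀ * K).trace) := by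
    apply ContinuousLinearMap.opNorm_le_bound _ (Real.sqrt_nonneg _)
    intro v
    have hv : ‖(LinearMap.toContinuousLinearMap (Matrix.toEuclideanLin K)) v‖ ^ 2
        = ∑ i, (K.mulVec (fun j => v j) i) ^ 2 := by
      rw [EuclideanSpace.norm_eq, Real.sq_sqrt (by positivity)]
      simp only [Matrix.toEuclideanLin, Real.norm_eq_abs, sq_abs, LinearMap.coe_toContinuousLinearMap',
        LinearEquiv.trans_apply, Matrix.toLin'_apply, WithLp.linearEquiv_symm_apply]
      rfl
    have hcs : ∑ i, (K.mulVec (fun j => v j) i) ^ 2 ≤ (Kᵀ * K).trace * ‖v‖ ^ 2 := by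
      have hvn : ‖v‖ ^ 2 = ∑ j, v j ^ 2 := by
        rw [EuclideanSpace.norm_eq, Real.sq_sqrt (by positivity)]
        simp [Real.norm_eq_abs, sq_abs]
      rw [htr, hvn, Finset.sum_comm, Finset.sum_mul]
      refine Finset.sum_le_sum fun i _ => ?_
      have := Finset.sum_mul_sq_le_sq_mul_sq Finset.univ (fun j => K i j) (fun j => v j)
      simpa [Matrix.mulVec, dotProduct] using this
    calc ‖(LinearMap.toContinuousLinearMap (Matrix.toEuclideanLin K)) v‖
        = Real.sqrt (‖(LinearMap.toContinuousLinearMap (Matrix.toEuclideanLin K)) v‖ ^ 2) :=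
          (Real.sqrt_sq (norm_nonneg _)).symm
      _ ≤ Real.sqrt ((Kᵀ * K).trace * ‖v‖ ^ 2) := Real.sqrt_le_sqrt (hv ▸ hcs)
      _ = Real.sqrt ((Kᵀ * K).trace) * ‖v‖ := by
          rw [Real.sqrt_mul htr_nonneg, Real.sqrt_sq (norm_nonneg _)]
  calc specNorm K ^ 2 ≤ Real.sqrt ((Kᵀ * K).trace) ^ 2 := by
        apply pow_le_pow_left₀ (norm_nonneg _) hbound
      _ = (Kᵀ * K).trace := Real.sq_sqrt htr_nonneg

/-- Coercivity as `‖K_i‖ → ∞`: the SOF costs blow up when the stabilizing gains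
escape to infinity in norm. -/
theorem coercive_at_infinity {n m d : ℕ}
    (A : Matrix (Fin n) (Fin n) ℝ) (B : Matrix (Fin n) (Fin m) ℝ)
    (C : Matrix (Fin d) (Fin n) ℝ)
    (Q X₀ : Matrix (Fin n) (Fin n) ℝ) (R : Matrix (Fin m) (Fin m) ℝ)
    (hQ : Q.PosDef) (hR : R.PosDef) (hX₀ : X₀.PosDef)
    (hC : C.rank = d)
    (K : ℕ → Matrix (Fin m) (Fin d) ℝ)
    (hstab : ∀ i, specRad (A - B * K i * C) < 1)
    (hnorm : Tendsto (fun i => specNorm (K i)) atTop atTop)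
    (S : ℕ → Matrix (Fin n) (Fin n) ℝ)
    (hS : ∀ i, S i = X₀ + (A - B * K i * C) * S i * (A - B * K i * C)ᵀ)
    (hSpos : ∀ i, (S i).PosDef) :
    Tendsto (fun i => ((Q + Cᵀ * (K i)ᵀ * R * (K i) * C) * S i).trace) atTop atTop := by
  obtain ⟨cX, hcX, hXpsd⟩ := exists_pos_sub_smul_psd hX₀
  obtain ⟨cR, hcR, hRpsd⟩ := exists_pos_sub_smul_psd hR
  obtain ⟨cC, hcC, hCpsd⟩ := exists_pos_sub_smul_psd (posDef_self_mul_transpose hC)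
  have hcpos : 0 < cX * (cR * cC) := by positivity
  have hbound : ∀ i, cX * (cR * (cC * specNorm (K i) ^ 2))
      ≤ ((Q + Cᵀ * (K i)ᵀ * R * (K i) * C) * S i).trace := by
    intro i
    set P := Cᵀ * (K i)ᵀ * R * (K i) * C with hPdef
    have hPpsd : P.PosSemidef := by
      have h0 := hR.posSemidef.conjTranspose_mul_mul_same (K i * C)
      have he : (K i * C)ᴴ * R * (K i * C) = P := by
        simp only [hPdef, Matrix.conjTranspose_mul, Matrix.transpose_mul,
          Matrix.conjTranspose_eq_transpose_of_trivial, Matrix.mul_assoc]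
      rwa [he] at h0
    have hSpsd := (hSpos i).posSemidef
    have hSX : (S i - X₀).PosSemidef := by
      have h0 := hSpsd.mul_mul_conjTranspose_same (A - B * K i * C)
      rw [Matrix.conjTranspose_eq_transpose_of_trivial] at h0
      have he : S i - X₀ = (A - B * K i * C) * S i * (A - B * K i * C)ᵀ := by
        conv_lhs => rw [hS i]
        rw [add_sub_cancel_left]
      rwa [he]
    have t0 : 0 ≤ (Q * S i).trace := trace_mul_psd_nonneg hQ.posSemidef hSpsd
    have t1 : (P * X₀).trace ≤ (P * S i).trace := by
      have h0 := trace_mul_psd_nonneg hPpsd hSX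
      rw [Matrix.mul_sub, Matrix.trace_sub] at h0; linarith
    have t2 : cX * P.trace ≤ (P * X₀).trace := le_trace_mul' hPpsd hXpsd
    set Y := (K i * C) * (K i * C)ᵀ with hY
    have hYpsd : Y.PosSemidef := by
      have h0 := Matrix.posSemidef_self_mul_conjTranspose (K i * C)
      rwa [Matrix.conjTranspose_eq_transpose_of_trivial] at h0
    have t3 : P.trace = (Y * R).trace := by
      rw [hY, Matrix.mul_assoc (K i * C) (K i * C)ᵀ R,
        Matrix.trace_mul_comm (K i * C) ((K i * C)ᵀ * R)]
      congr 1
      simp only [hPdef, Matrix.transpose_mul, Matrix.mul_assoc]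
    have t4 : cR * Y.trace ≤ (Y * R).trace := le_trace_mul' hYpsd hRpsd
    rw [← t3] at t4
    have hKKpsd : ((K i)ᵀ * K i).PosSemidef := by
      have h0 := Matrix.posSemidef_conjTranspose_mul_self (K i)
      rwa [Matrix.conjTranspose_eq_transpose_of_trivial] at h0
    have t5 : Y.trace = (((K i)ᵀ * K i) * (C * Cᵀ)).trace := by
      rw [Matrix.mul_assoc ((K i)ᵀ) (K i) (C * Cᵀ),
        Matrix.trace_mul_comm ((K i)ᵀ) (K i * (C * Cᵀ))]
      congr 1
      simp only [hY, Matrix.transpose_mul, Matrix.mul_assoc]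
    have t6 : cC * ((K i)ᵀ * K i).trace ≤ (((K i)ᵀ * K i) * (C * Cᵀ)).trace :=
      le_trace_mul' hKKpsd hCpsd
    rw [← t5] at t6
    have t7 : specNorm (K i) ^ 2 ≤ ((K i)ᵀ * K i).trace := specNorm_sq_le_trace (K i)
    have h1 : cC * specNorm (K i) ^ 2 ≤ Y.trace :=
      le_trans (mul_le_mul_of_nonneg_left t7 hcC.le) t6
    have h2 : cR * (cC * specNorm (K i) ^ 2) ≤ P.trace :=
      le_trans (mul_le_mul_of_nonneg_left h1 hcR.le) t4
    have h3 : cX * (cR * (cC * specNorm (K i) ^ 2)) ≤ (P * S i).trace :=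
      le_trans (mul_le_mul_of_nonneg_left h2 hcX.le) (le_trans t2 t1)
    rw [Matrix.add_mul, Matrix.trace_add]
    linarith
  have hsq : Tendsto (fun i => specNorm (K i) ^ 2) atTop atTop := by
    have := hnorm.atTop_mul_atTop₀ hnorm
    simpa [pow_two] using this
  have hfin : Tendsto (fun i => cX * (cR * (cC * specNorm (K i) ^ 2))) atTop atTop := by
    have h := hsq.const_mul_atTop (by positivity : (0:ℝ) < cX * cR * cC)
    refine h.congr fun i => by ring
  exact tendsto_atTop_mono hbound hfin
end

section
/- Gradient dominance (fully observed analogue): if C ∈ ℝ^{n×n} has rank n, then for every stabilizing K, J(K) − J* ≤ ‖Σ_{K*}‖ ‖∇J(K)‖_F² / (4 μ² σ_min(C)² λ_min(R)), where ∇J(K) = 2 E_K Σ_K Cᵀ and μ = σ_min(X₀). -/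
open Matrix Filter Topology

variable {n m : ℕ}

lemma psd_trace_nonneg {A : Matrix (Fin n) (Fin n) ℝ} (hA : A.PosSemidef) :
    0 ≤ A.trace := by
  rw [Matrix.trace]
  refine Finset.sum_nonneg fun i _ => ?_
  have h := hA.dotProduct_mulVec_nonneg (Pi.single i 1)
  simpa [dotProduct, Matrix.mulVec, Pi.single_apply] using h

section
open scoped MatrixOrder

lemma psd_trace_mul_nonneg {A B : Matrix (Fin n) (Fin n) ℝ}
    (hA : A.PosSemidef) (hB : B.PosSemidef) : 0 ≤ (A * B).trace := by
  classical
  have hsymm : (CFC.sqrt A)ᵀ = CFC.sqrt A := by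
    have := (Matrix.nonneg_iff_posSemidef.mp (CFC.sqrt_nonneg A)).1
    rwa [Matrix.IsHermitian, conjTranspose_eq_transpose_of_trivial] at this
  have h1 : (A * B).trace = (CFC.sqrt A * B * CFC.sqrt A).trace := by
    conv_lhs => rw [← CFC.sqrt_mul_sqrt_self A (Matrix.nonneg_iff_posSemidef.mpr hA)]
    rw [Matrix.mul_assoc, Matrix.trace_mul_comm, Matrix.mul_assoc]
  rw [h1]
  refine psd_trace_nonneg ?_
  have := hB.mul_mul_conjTranspose_same (CFC.sqrt A)
  rwa [conjTranspose_eq_transpose_of_trivial, hsymm] at this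

end

/-- if `H - c•1` is PSD and `N` is PSD then `c * tr N ≤ tr (N * H)` -/
lemma trace_mul_ge {N H : Matrix (Fin n) (Fin n) ℝ} (c : ℝ)
    (hN : N.PosSemidef) (hH : (H - c • 1).PosSemidef) :
    c * N.trace ≤ (N * H).trace := by
  have h := psd_trace_mul_nonneg hN hH
  rw [Matrix.mul_sub, Matrix.trace_sub, Matrix.mul_smul, Matrix.mul_one, Matrix.trace_smul,
    sub_nonneg, smul_eq_mul] at h
  exact h

/-- if `c•1 - H` is PSD and `N` is PSD then `tr (N * H) ≤ c * tr N` -/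
lemma trace_mul_le {N H : Matrix (Fin n) (Fin n) ℝ} (c : ℝ)
    (hN : N.PosSemidef) (hH : (c • 1 - H).PosSemidef) :
    (N * H).trace ≤ c * N.trace := by
  have h := psd_trace_mul_nonneg hN hH
  rw [Matrix.mul_sub, Matrix.trace_sub, Matrix.mul_smul, Matrix.mul_one, Matrix.trace_smul,
    sub_nonneg, smul_eq_mul] at h
  exact h

/-- A hermitian real matrix whose eigenvalues are all `≥ c` satisfies `H - c•1 ⪰ 0`. -/
lemma sub_smul_one_posSemidef {H : Matrix (Fin n) (Fin n) ℝ} (hH : H.IsHermitian)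
    {c : ℝ} (hc : ∀ i, c ≤ hH.eigenvalues i) : (H - c • 1).PosSemidef := by
  classical
  have hU : (hH.eigenvectorUnitary : Matrix (Fin n) (Fin n) ℝ) *
      star (hH.eigenvectorUnitary : Matrix (Fin n) (Fin n) ℝ) = 1 :=
    Matrix.mem_unitaryGroup_iff.mp hH.eigenvectorUnitary.2
  have hDiag : (diagonal (RCLike.ofReal ∘ hH.eigenvalues) : Matrix (Fin n) (Fin n) ℝ) - c • 1
      = diagonal (fun i => hH.eigenvalues i - c) := by
    rw [Matrix.smul_one_eq_diagonal, Matrix.diagonal_sub]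
    rfl
  have key2 : (hH.eigenvectorUnitary : Matrix (Fin n) (Fin n) ℝ) *
      diagonal (fun i => hH.eigenvalues i - c) *
      star (hH.eigenvectorUnitary : Matrix (Fin n) (Fin n) ℝ) = H - c • 1 := by
    rw [← hDiag, Matrix.mul_sub, Matrix.sub_mul, Matrix.mul_smul, Matrix.mul_one,
      Matrix.smul_mul, hU]
    conv_rhs => rw [hH.spectral_theorem, Unitary.conjStarAlgAut_apply]
  rw [← key2, Matrix.star_eq_conjTranspose]
  exact (Matrix.posSemidef_diagonal_iff.mpr fun i => sub_nonneg.2 (hc i)).mul_mul_conjTranspose_same _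

/-- quadratic-form consequence of `H - c•1 ⪰ 0` over ℝ -/
lemma quad_ge_of_psd {H : Matrix (Fin n) (Fin n) ℝ} {c : ℝ}
    (h : (H - c • 1).PosSemidef) (x : Fin n → ℝ) :
    c * (x ⬝ᵥ x) ≤ x ⬝ᵥ H *ᵥ x := by
  have h2 := h.dotProduct_mulVec_nonneg x
  simp only [star_trivial, Matrix.sub_mulVec, Matrix.smul_mulVec, Matrix.one_mulVec,
    dotProduct_sub, dotProduct_smul, smul_eq_mul, sub_nonneg] at h2
  exact h2


lemma spectrum_ge {k : ℕ} {R' : Matrix (Fin k) (Fin k) ℝ} {c₀ : ℝ}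
    (hpsd : (R' - c₀ • 1).PosSemidef) : ∀ r ∈ spectrum ℝ R', c₀ ≤ r := by
  classical
  intro r hr
  rw [spectrum.mem_iff] at hr
  have hdet : (algebraMap ℝ (Matrix (Fin k) (Fin k) ℝ) r - R').det = 0 := by
    by_contra h
    exact hr ((Matrix.isUnit_iff_isUnit_det _).mpr (isUnit_iff_ne_zero.mpr h))
  obtain ⟨v, hv0, hv⟩ := (Matrix.exists_mulVec_eq_zero_iff).mpr hdet
  have hRv : R' *ᵥ v = r • v := by
    rw [Matrix.sub_mulVec, Algebra.algebraMap_eq_smul_one, Matrix.smul_mulVec,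
      Matrix.one_mulVec, sub_eq_zero] at hv
    exact hv.symm
  have hq := quad_ge_of_psd hpsd v
  rw [hRv, dotProduct_smul, smul_eq_mul] at hq
  have hvv : (0:ℝ) < v ⬝ᵥ v := by
    have := Matrix.dotProduct_star_self_pos_iff (v := v) |>.mpr hv0
    simpa using this
  nlinarith

lemma lambdaMin_facts {k : ℕ} {R' : Matrix (Fin k) (Fin k) ℝ} (hR : R'.PosDef) (hk : 0 < k) :
    0 < lambdaMin R' ∧ (R' - lambdaMin R' • 1).PosSemidef := by
  classical
  have hne : (Finset.univ : Finset (Fin k)).Nonempty := ⟨⟨0, hk⟩, Finset.mem_univ _⟩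
  set c₀ := Finset.univ.inf' hne hR.1.eigenvalues with hc₀
  have hc₀le : ∀ i, c₀ ≤ hR.1.eigenvalues i := fun i => Finset.inf'_le _ (Finset.mem_univ i)
  have hpsd₀ : (R' - c₀ • 1).PosSemidef := sub_smul_one_posSemidef hR.1 hc₀le
  have hc₀pos : 0 < c₀ := by
    obtain ⟨i₀, _, h⟩ := Finset.exists_mem_eq_inf' hne hR.1.eigenvalues
    rw [hc₀, h]
    exact hR.eigenvalues_pos i₀
  have hge := spectrum_ge hpsd₀
  have hmem : hR.1.eigenvalues ⟨0, hk⟩ ∈ spectrum ℝ R' :=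
    hR.1.eigenvalues_mem_spectrum_real _
  have hbdd : BddBelow (spectrum ℝ R') := ⟨c₀, fun r hr => hge r hr⟩
  have hlam_le : ∀ i, lambdaMin R' ≤ hR.1.eigenvalues i :=
    fun i => csInf_le hbdd (hR.1.eigenvalues_mem_spectrum_real i)
  have hlam_ge : c₀ ≤ lambdaMin R' := le_csInf ⟨_, hmem⟩ hge
  exact ⟨lt_of_lt_of_le hc₀pos hlam_ge, sub_smul_one_posSemidef hR.1 hlam_le⟩


lemma norm_equiv_symm_sq {k : ℕ} (x : Fin k → ℝ) :
    ‖(WithLp.equiv 2 (Fin k → ℝ)).symm x‖ ^ 2 = x ⬝ᵥ x := by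
  rw [← real_inner_self_eq_norm_sq]
  exact (EuclideanSpace.inner_toLp_toLp x x).trans (by simp)

lemma inner_dot {k : ℕ} (x y : Fin k → ℝ) :
    (inner ℝ ((WithLp.equiv 2 (Fin k → ℝ)).symm x) ((WithLp.equiv 2 (Fin k → ℝ)).symm y) : ℝ)
      = x ⬝ᵥ y := by
  simp [EuclideanSpace.inner_toLp_toLp, dotProduct, mul_comm]

lemma sigmaMin_nonneg' {k : ℕ} (A : Matrix (Fin k) (Fin k) ℝ) : 0 ≤ sigmaMin A :=
  Real.sInf_nonneg (by rintro x ⟨v, -, rfl⟩; exact norm_nonneg _)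

lemma sigmaMin_posdef_facts {k : ℕ} {X : Matrix (Fin k) (Fin k) ℝ} (hX : X.PosDef)
    (hk : 0 < k) :
    0 < sigmaMin X ∧ (X - sigmaMin X • 1).PosSemidef := by
  classical
  haveI : NeZero k := ⟨hk.ne'⟩
  have hsym : Xᵀ = X := by
    have := hX.1
    rwa [Matrix.IsHermitian, conjTranspose_eq_transpose_of_trivial] at this
  obtain ⟨hεpos, hεpsd⟩ := lambdaMin_facts hX hk
  set ε := lambdaMin X
  -- the sphere is nonempty
  have hsphne : ∃ v : EuclideanSpace ℝ (Fin k), ‖v‖ = 1 :=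
    ⟨EuclideanSpace.single ⟨0, hk⟩ (1:ℝ), by simp⟩
  -- lower bound ε ≤ f v on the sphere
  have hlow : ∀ v : EuclideanSpace ℝ (Fin k), ‖v‖ = 1 → ε ≤ ‖Matrix.toEuclideanLin Xᵀ v‖ := by
    intro v hv
    set w : Fin k → ℝ := WithLp.equiv 2 (Fin k → ℝ) v with hw
    have hq := quad_ge_of_psd hεpsd w
    have hww : w ⬝ᵥ w = 1 := by
      have : v = (WithLp.equiv 2 (Fin k → ℝ)).symm w := rfl
      rw [← norm_equiv_symm_sq w, ← this, hv, one_pow]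
    have hinner : w ⬝ᵥ X *ᵥ w
        = (inner ℝ v (Matrix.toEuclideanLin X v) : ℝ) := by
      rw [EuclideanSpace.inner_eq_star_dotProduct]
      simp [Matrix.toEuclideanLin_apply, dotProduct, hw, mul_comm]
    have hcs : (inner ℝ v (Matrix.toEuclideanLin X v) : ℝ)
        ≤ ‖Matrix.toEuclideanLin X v‖ := by
      have := real_inner_le_norm v (Matrix.toEuclideanLin X v)
      rwa [hv, one_mul] at this
    rw [hsym]
    calc ε = ε * (w ⬝ᵥ w) := by rw [hww, mul_one]
      _ ≤ w ⬝ᵥ X *ᵥ w := hq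
      _ ≤ ‖Matrix.toEuclideanLin X v‖ := by rw [hinner]; exact hcs
  have hσge : ε ≤ sigmaMin X := by
    refine le_csInf ?_ ?_
    · obtain ⟨v, hv⟩ := hsphne
      exact ⟨_, ⟨v, hv, rfl⟩⟩
    · rintro b ⟨v, hv, rfl⟩
      exact hlow v hv
  have hbdd : BddBelow ((fun v : EuclideanSpace ℝ (Fin k) =>
      ‖Matrix.toEuclideanLin Xᵀ v‖) '' {v | ‖v‖ = 1}) :=
    ⟨0, by rintro b ⟨v, -, rfl⟩; exact norm_nonneg _⟩
  -- upper bound by each eigenvalue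
  have hup : ∀ i, sigmaMin X ≤ hX.1.eigenvalues i := by
    intro i
    have hb1 : ‖hX.1.eigenvectorBasis i‖ = 1 := hX.1.eigenvectorBasis.orthonormal.1 i
    have hval : ‖Matrix.toEuclideanLin Xᵀ (hX.1.eigenvectorBasis i)‖ = hX.1.eigenvalues i := by
      rw [hsym]
      have happ : Matrix.toEuclideanLin X (hX.1.eigenvectorBasis i)
          = hX.1.eigenvalues i • hX.1.eigenvectorBasis i := by
        apply (WithLp.equiv 2 (Fin k → ℝ)).injective
        exact hX.1.mulVec_eigenvectorBasis i
      rw [happ, norm_smul, hb1, mul_one, Real.norm_eq_abs,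
        abs_of_pos (hX.eigenvalues_pos i)]
    exact hval ▸ csInf_le hbdd ⟨_, hb1, rfl⟩
  exact ⟨lt_of_lt_of_le hεpos hσge, sub_smul_one_posSemidef hX.1 hup⟩

lemma rank_isUnit {k : ℕ} {C : Matrix (Fin k) (Fin k) ℝ} (hC : C.rank = k) :
    IsUnit C.det := by
  classical
  rw [← Matrix.isUnit_iff_isUnit_det]
  rw [← Matrix.mulVec_injective_iff_isUnit]
  have hrange : LinearMap.range C.mulVecLin = ⊤ := by
    apply Submodule.eq_top_of_finrank_eq
    rw [← Matrix.rank, hC]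
    simp [Module.finrank_fintype_fun_eq_card]
  have hsurj : Function.Surjective C.mulVecLin := LinearMap.range_eq_top.mp hrange
  have hinj := (LinearMap.injective_iff_surjective (f := C.mulVecLin)).mpr hsurj
  exact fun x y h => hinj (by simpa [Matrix.mulVecLin_apply] using h)

lemma sigmaMin_rank_facts {k : ℕ} {C : Matrix (Fin k) (Fin k) ℝ} (hC : C.rank = k)
    (hk : 0 < k) :
    0 < sigmaMin C ∧ (Cᵀ * C - sigmaMin C ^ 2 • 1).PosSemidef := by
  classical
  have hdet : IsUnit C.det := rank_isUnit hC
  have hdetT : IsUnit Cᵀ.det := by rwa [Matrix.det_transpose]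
  -- positivity of sigmaMin C
  have hsph : {v : EuclideanSpace ℝ (Fin k) | ‖v‖ = 1}
      = Metric.sphere (0 : EuclideanSpace ℝ (Fin k)) 1 := by
    ext v; simp [mem_sphere_zero_iff_norm]
  have hcomp : IsCompact {v : EuclideanSpace ℝ (Fin k) | ‖v‖ = 1} := by
    rw [hsph]; exact isCompact_sphere 0 1
  have hne : ({v : EuclideanSpace ℝ (Fin k) | ‖v‖ = 1}).Nonempty :=
    ⟨EuclideanSpace.single ⟨0, hk⟩ (1:ℝ), by simp⟩
  have hcont : Continuous fun v : EuclideanSpace ℝ (Fin k) =>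
      ‖Matrix.toEuclideanLin Cᵀ v‖ :=
    ((Matrix.toEuclideanLin Cᵀ).continuous_of_finiteDimensional).norm
  obtain ⟨v₀, hv₀mem, hv₀min⟩ := hcomp.exists_isMinOn hne hcont.continuousOn
  have hn1 : ‖v₀‖ = 1 := hv₀mem
  have hv₀pos : 0 < ‖Matrix.toEuclideanLin Cᵀ v₀‖ := by
    rw [norm_pos_iff]
    intro h0
    have : v₀ = 0 := by
      have hinj : Function.Injective (Cᵀ.mulVec) :=
        Matrix.mulVec_injective_iff_isUnit.mpr ((Matrix.isUnit_iff_isUnit_det _).mpr hdetT)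
      have hw : Cᵀ *ᵥ (WithLp.equiv 2 (Fin k → ℝ) v₀) = 0 := by
        have := congrArg (WithLp.equiv 2 (Fin k → ℝ)) h0
        simpa [Matrix.ofLp_toEuclideanLin_apply] using this
      have hw0 : (WithLp.equiv 2 (Fin k → ℝ)) v₀ = 0 :=
        hinj (by rw [hw, Matrix.mulVec_zero])
      apply (WithLp.equiv 2 (Fin k → ℝ)).injective
      simpa using hw0
    rw [this, norm_zero] at hn1
    exact one_ne_zero hn1.symm
  have hσpos : 0 < sigmaMin C := by
    refine lt_of_lt_of_le hv₀pos (le_csInf ⟨_, ⟨v₀, hv₀mem, rfl⟩⟩ ?_)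
    rintro b ⟨v, hv, rfl⟩
    exact hv₀min hv
  refine ⟨hσpos, ?_⟩
  set σ := sigmaMin C with hσ
  -- quadratic form bound
  have hquad : ∀ x : Fin k → ℝ, σ ^ 2 * (x ⬝ᵥ x) ≤ (C *ᵥ x) ⬝ᵥ (C *ᵥ x) := by
    intro x
    rcases eq_or_ne x 0 with rfl | hx
    · simp
    · set w : Fin k → ℝ := Cᵀ⁻¹ *ᵥ x with hwdef
      have hCw : Cᵀ *ᵥ w = x := by
        rw [hwdef, Matrix.mulVec_mulVec, Matrix.mul_nonsing_inv _ hdetT, Matrix.one_mulVec]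
      have hw0 : w ≠ 0 := by
        intro h; apply hx; rw [← hCw, h, Matrix.mulVec_zero]
      set wE : EuclideanSpace ℝ (Fin k) := (WithLp.equiv 2 (Fin k → ℝ)).symm w
      have hnw : 0 < ‖wE‖ := by
        rw [norm_pos_iff]
        exact fun h => hw0 ((WithLp.equiv 2 (Fin k → ℝ)).symm.injective h)
      set xE : EuclideanSpace ℝ (Fin k) := (WithLp.equiv 2 (Fin k → ℝ)).symm x
      have hnx : 0 < ‖xE‖ := by
        rw [norm_pos_iff]
        exact fun h => hx ((WithLp.equiv 2 (Fin k → ℝ)).symm.injective h)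
      -- σ * ‖wE‖ ≤ ‖xE‖
      have hu : ‖(‖wE‖⁻¹ • wE : EuclideanSpace ℝ (Fin k))‖ = 1 := by
        rw [norm_smul, Real.norm_eq_abs, abs_of_pos (inv_pos.mpr hnw), inv_mul_cancel₀ hnw.ne']
      have happ : Matrix.toEuclideanLin Cᵀ wE = xE := by
        apply (WithLp.equiv 2 (Fin k → ℝ)).injective
        exact hCw
      have hσle : σ ≤ ‖wE‖⁻¹ * ‖xE‖ := by
        have hmem : ‖(‖wE‖⁻¹ • wE : EuclideanSpace ℝ (Fin k))‖ = 1 := hu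
        have : σ ≤ ‖Matrix.toEuclideanLin Cᵀ (‖wE‖⁻¹ • wE)‖ := by
          have hbdd : BddBelow ((fun v : EuclideanSpace ℝ (Fin k) =>
              ‖Matrix.toEuclideanLin Cᵀ v‖) '' {v | ‖v‖ = 1}) :=
            ⟨0, by rintro b ⟨v, -, rfl⟩; exact norm_nonneg _⟩
          exact csInf_le hbdd ⟨_, hmem, rfl⟩
        rwa [_root_.map_smul, norm_smul, Real.norm_eq_abs, abs_of_pos (inv_pos.mpr hnw), happ] at this
      have hσnw : σ * ‖wE‖ ≤ ‖xE‖ := by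
        rw [mul_comm] at hσle
        calc σ * ‖wE‖ ≤ (‖xE‖ * ‖wE‖⁻¹) * ‖wE‖ := by
              exact mul_le_mul_of_nonneg_right hσle (norm_nonneg _)
          _ = ‖xE‖ := by field_simp
      -- Cauchy–Schwarz : ‖xE‖² ≤ ‖Ĉx‖ ‖wE‖
      set cxE : EuclideanSpace ℝ (Fin k) := (WithLp.equiv 2 (Fin k → ℝ)).symm (C *ᵥ x)
      have hxsq : ‖xE‖ ^ 2 = (C *ᵥ x) ⬝ᵥ w := by
        rw [norm_equiv_symm_sq, ← Matrix.vecMul_transpose, ← Matrix.dotProduct_mulVec, hCw]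
      have hcs : (C *ᵥ x) ⬝ᵥ w ≤ ‖cxE‖ * ‖wE‖ := by
        rw [← inner_dot]
        exact real_inner_le_norm _ _
      have hkey : ‖xE‖ ^ 2 ≤ ‖cxE‖ * ‖wE‖ := hxsq ▸ hcs
      -- combine
      have h1 : σ * ‖xE‖ ^ 2 ≤ ‖xE‖ * ‖cxE‖ := by
        calc σ * ‖xE‖ ^ 2 ≤ σ * (‖cxE‖ * ‖wE‖) := by
              exact mul_le_mul_of_nonneg_left hkey hσpos.le
          _ = (σ * ‖wE‖) * ‖cxE‖ := by ring
          _ ≤ ‖xE‖ * ‖cxE‖ := mul_le_mul_of_nonneg_right hσnw (norm_nonneg _)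
      have h2 : σ * ‖xE‖ ≤ ‖cxE‖ := by
        have := mul_le_mul_of_nonneg_left h1 (le_of_lt (inv_pos.mpr hnx))
        calc σ * ‖xE‖ = ‖xE‖⁻¹ * (σ * ‖xE‖ ^ 2) := by field_simp
          _ ≤ ‖xE‖⁻¹ * (‖xE‖ * ‖cxE‖) := mul_le_mul_of_nonneg_left h1 (by positivity)
          _ = ‖cxE‖ := by field_simp
      have h3 : (σ * ‖xE‖) ^ 2 ≤ ‖cxE‖ ^ 2 := by
        apply sq_le_sq' _ h2
        nlinarith [norm_nonneg xE, norm_nonneg cxE, hσpos.le]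
      rw [mul_pow] at h3
      rw [norm_equiv_symm_sq] at h3
      rw [norm_equiv_symm_sq] at h3
      exact h3
  -- conclude PSD
  refine Matrix.PosSemidef.of_dotProduct_mulVec_nonneg ?_ ?_
  · rw [Matrix.IsHermitian, conjTranspose_eq_transpose_of_trivial, Matrix.transpose_sub,
      Matrix.transpose_mul, Matrix.transpose_transpose, Matrix.transpose_smul,
      Matrix.transpose_one]
  · intro x
    have := hquad x
    simp only [star_trivial, Matrix.sub_mulVec, Matrix.smul_mulVec, Matrix.one_mulVec,
      dotProduct_sub, dotProduct_smul, smul_eq_mul, sub_nonneg]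
    rw [← Matrix.mulVec_mulVec]
    rw [Matrix.dotProduct_mulVec x Cᵀ, Matrix.vecMul_transpose]
    exact this

lemma step1_algebra {n m : ℕ} (A : Matrix (Fin n) (Fin n) ℝ) (B : Matrix (Fin n) (Fin m) ℝ)
    (C : Matrix (Fin n) (Fin n) ℝ) (K Ks : Matrix (Fin m) (Fin n) ℝ)
    (Q : Matrix (Fin n) (Fin n) ℝ) (R : Matrix (Fin m) (Fin m) ℝ)
    (Pk Ps : Matrix (Fin n) (Fin n) ℝ) (hPk : Pkᵀ = Pk) (hR : Rᵀ = R)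
    (e1 : Pk = Q + Cᵀ * Kᵀ * R * K * C + (A - B * K * C)ᵀ * Pk * (A - B * K * C))
    (e2 : Ps = Q + Cᵀ * Ksᵀ * R * Ks * C + (A - B * Ks * C)ᵀ * Ps * (A - B * Ks * C)) :
    Ps - Pk = ((Ks * C - K * C)ᵀ * (R + Bᵀ * Pk * B) * (Ks * C - K * C)
      + (Ks * C - K * C)ᵀ * ((R + Bᵀ * Pk * B) * K * C - Bᵀ * Pk * A)
      + ((R + Bᵀ * Pk * B) * K * C - Bᵀ * Pk * A)ᵀ * (Ks * C - K * C))
      + (A - B * Ks * C)ᵀ * (Ps - Pk) * (A - B * Ks * C) := by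
  conv_lhs => rw [e2, e1]
  simp only [Matrix.transpose_sub, Matrix.transpose_add, Matrix.transpose_mul,
    Matrix.transpose_transpose, hPk, hR]
  simp only [Matrix.mul_sub, Matrix.sub_mul, Matrix.mul_add, Matrix.add_mul, Matrix.mul_assoc,
    sub_eq_add_neg, neg_add, Matrix.neg_mul, Matrix.mul_neg, neg_neg]
  abel

lemma step2_trace {k : ℕ} {D M As Sg X₀ : Matrix (Fin k) (Fin k) ℝ}
    (hD : D = M + Asᵀ * D * As) (hSg : Sg = X₀ + As * Sg * Asᵀ) :
    (M * Sg).trace = (D * X₀).trace := by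
  have hM : M = D - Asᵀ * D * As := eq_sub_iff_add_eq.mpr hD.symm
  have hX : X₀ = Sg - As * Sg * Asᵀ := eq_sub_iff_add_eq.mpr hSg.symm
  rw [hM, hX, Matrix.sub_mul, Matrix.mul_sub, Matrix.trace_sub, Matrix.trace_sub]
  congr 1
  have h2 : (Asᵀ * (D * (As * Sg))).trace = ((D * (As * Sg)) * Asᵀ).trace :=
    Matrix.trace_mul_comm _ _
  simp only [Matrix.mul_assoc] at h2 ⊢
  exact h2

lemma complsq {n m : ℕ} (Δ E : Matrix (Fin m) (Fin n) ℝ) (G : Matrix (Fin m) (Fin m) ℝ)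
    {c : ℝ} (hc : 0 < c) (hGR : (G - c • 1).PosSemidef) :
    ((Δᵀ * G * Δ + Δᵀ * E + Eᵀ * Δ) + c⁻¹ • (Eᵀ * E)).PosSemidef := by
  have hs : Real.sqrt c * Real.sqrt c = c := Real.mul_self_sqrt hc.le
  have hsne : Real.sqrt c ≠ 0 := by positivity
  have key : (Δᵀ * G * Δ + Δᵀ * E + Eᵀ * Δ) + c⁻¹ • (Eᵀ * E)
      = Δᵀ * (G - c • 1) * Δ +
        (Real.sqrt c • Δ + (Real.sqrt c)⁻¹ • E)ᵀ * (Real.sqrt c • Δ + (Real.sqrt c)⁻¹ • E) := by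
    simp only [Matrix.transpose_add, Matrix.transpose_smul, Matrix.add_mul, Matrix.mul_add,
      Matrix.smul_mul, Matrix.mul_smul, Matrix.sub_mul, Matrix.mul_sub, smul_add, smul_smul,
      Matrix.mul_one, Matrix.one_mul, ← mul_inv, hs, mul_inv_cancel₀ hsne, inv_mul_cancel₀ hsne,
      one_smul]
    abel
  rw [key]
  have h1 : (Δᵀ * (G - c • 1) * Δ).PosSemidef := by
    have := hGR.conjTranspose_mul_mul_same Δ
    rwa [conjTranspose_eq_transpose_of_trivial] at this
  have h2 : ((Real.sqrt c • Δ + (Real.sqrt c)⁻¹ • E)ᵀ *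
      (Real.sqrt c • Δ + (Real.sqrt c)⁻¹ • E)).PosSemidef := by
    have := Matrix.posSemidef_conjTranspose_mul_self (Real.sqrt c • Δ + (Real.sqrt c)⁻¹ • E)
    rwa [conjTranspose_eq_transpose_of_trivial] at this
  exact h1.add h2



lemma psd_transpose_mul_self {j k : ℕ} (A : Matrix (Fin j) (Fin k) ℝ) :
    (Aᵀ * A).PosSemidef := by
  have := Matrix.posSemidef_conjTranspose_mul_self A
  rwa [conjTranspose_eq_transpose_of_trivial] at this

lemma frobNorm_sq {j k : ℕ} (A : Matrix (Fin j) (Fin k) ℝ) :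
    frobNorm A ^ 2 = (Aᵀ * A).trace := by
  rw [frobNorm, Real.sq_sqrt (psd_trace_nonneg (psd_transpose_mul_self A))]

lemma specNorm_smul_one_sub_psd {k : ℕ} {Sg : Matrix (Fin k) (Fin k) ℝ} (hSg : Sgᵀ = Sg) :
    (specNorm Sg • 1 - Sg).PosSemidef := by
  refine Matrix.PosSemidef.of_dotProduct_mulVec_nonneg ?_ ?_
  · rw [Matrix.IsHermitian, conjTranspose_eq_transpose_of_trivial, Matrix.transpose_sub,
      Matrix.transpose_smul, Matrix.transpose_one, hSg]
  · intro x
    simp only [star_trivial, Matrix.sub_mulVec, Matrix.smul_mulVec, Matrix.one_mulVec,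
      dotProduct_sub, dotProduct_smul, smul_eq_mul, sub_nonneg]
    set xE : EuclideanSpace ℝ (Fin k) := (WithLp.equiv 2 (Fin k → ℝ)).symm x with hxE
    have h1 : x ⬝ᵥ Sg *ᵥ x = (inner ℝ xE (Matrix.toEuclideanLin Sg xE) : ℝ) := by
      rw [hxE]; exact (inner_dot x (Sg *ᵥ x)).symm
    have h2 : (inner ℝ xE (Matrix.toEuclideanLin Sg xE) : ℝ)
        ≤ ‖xE‖ * ‖Matrix.toEuclideanLin Sg xE‖ := real_inner_le_norm _ _
    have h3 : ‖Matrix.toEuclideanLin Sg xE‖ ≤ specNorm Sg * ‖xE‖ := by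
      unfold specNorm
      have h := (LinearMap.toContinuousLinearMap (Matrix.toEuclideanLin Sg)).le_opNorm xE
      simpa only [LinearMap.coe_toContinuousLinearMap'] using h
    have h4 : ‖xE‖ ^ 2 = x ⬝ᵥ x := norm_equiv_symm_sq x
    calc x ⬝ᵥ Sg *ᵥ x ≤ ‖xE‖ * (specNorm Sg * ‖xE‖) := by
          rw [h1]; exact h2.trans (mul_le_mul_of_nonneg_left h3 (norm_nonneg _))
      _ = specNorm Sg * ‖xE‖ ^ 2 := by ring
      _ = specNorm Sg * (x ⬝ᵥ x) := by rw [h4]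

lemma dot_self_zero {k : ℕ} {x : Fin k → ℝ} (h : x ⬝ᵥ x = 0) : x = 0 := by
  by_contra hx
  have := Matrix.dotProduct_star_self_pos_iff (v := x) |>.mpr hx
  simp only [star_trivial] at this
  exact this.ne' h

lemma sq_psd {k : ℕ} {Sg : Matrix (Fin k) (Fin k) ℝ} (hsym : Sgᵀ = Sg) {μ : ℝ}
    (hμ : 0 ≤ μ) (h : (Sg - μ • 1).PosSemidef) :
    (Sg * Sg - μ ^ 2 • 1).PosSemidef := by
  refine Matrix.PosSemidef.of_dotProduct_mulVec_nonneg ?_ ?_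
  · rw [Matrix.IsHermitian, conjTranspose_eq_transpose_of_trivial, Matrix.transpose_sub,
      Matrix.transpose_mul, hsym, Matrix.transpose_smul, Matrix.transpose_one]
  · intro x
    simp only [star_trivial, Matrix.sub_mulVec, Matrix.smul_mulVec, Matrix.one_mulVec,
      dotProduct_sub, dotProduct_smul, smul_eq_mul, sub_nonneg]
    have hq : μ * (x ⬝ᵥ x) ≤ x ⬝ᵥ Sg *ᵥ x := quad_ge_of_psd h x
    have hsq : x ⬝ᵥ (Sg * Sg) *ᵥ x = (Sg *ᵥ x) ⬝ᵥ (Sg *ᵥ x) := by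
      rw [← Matrix.mulVec_mulVec, Matrix.dotProduct_mulVec x Sg, ← hsym,
        Matrix.vecMul_transpose, hsym]
    -- Cauchy-Schwarz
    have hcs : (x ⬝ᵥ Sg *ᵥ x) ^ 2 ≤ (x ⬝ᵥ x) * ((Sg *ᵥ x) ⬝ᵥ (Sg *ᵥ x)) := by
      have habs := abs_real_inner_le_norm ((WithLp.equiv 2 (Fin k → ℝ)).symm x)
        ((WithLp.equiv 2 (Fin k → ℝ)).symm (Sg *ᵥ x))
      have h1 := inner_dot x (Sg *ᵥ x)
      have h2 := norm_equiv_symm_sq x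
      have h3 := norm_equiv_symm_sq (Sg *ᵥ x)
      have hs2 := pow_le_pow_left₀ (abs_nonneg _) habs 2
      rw [sq_abs, h1, mul_pow, h2, h3] at hs2
      exact hs2
    rcases eq_or_ne (x ⬝ᵥ x) 0 with h0 | h0
    · have hx0 : x = 0 := dot_self_zero h0
      subst hx0
      simp
    · have hnn : 0 ≤ x ⬝ᵥ x := Finset.sum_nonneg fun i _ => mul_self_nonneg _
      have hxx : 0 < x ⬝ᵥ x := lt_of_le_of_ne hnn (Ne.symm h0)
      have hq0 : 0 ≤ μ * (x ⬝ᵥ x) := mul_nonneg hμ hnn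
      have hq2 : (μ * (x ⬝ᵥ x)) ^ 2 ≤ (x ⬝ᵥ Sg *ᵥ x) ^ 2 := by
        exact pow_le_pow_left₀ hq0 hq 2
      have key : (μ ^ 2 * (x ⬝ᵥ x)) * (x ⬝ᵥ x) ≤ ((Sg *ᵥ x) ⬝ᵥ (Sg *ᵥ x)) * (x ⬝ᵥ x) := by
        nlinarith [hq2, hcs]
      have := le_of_mul_le_mul_right key hxx
      rw [hsq]
      exact this

/-- Gradient dominance in the fully observed case (`C` square of rank `n`):
`J(K) − J* ≤ ‖Σ_{K*}‖ ‖∇J(K)‖_F² / (4 μ² σ_min(C)² λ_min(R))`, with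
`∇J(K) = 2 E_K Σ_K Cᵀ` and `μ = σ_min(X₀)`. -/
theorem gradient_dominance {n m : ℕ}
    (A : Matrix (Fin n) (Fin n) ℝ) (B : Matrix (Fin n) (Fin m) ℝ)
    (C : Matrix (Fin n) (Fin n) ℝ)
    (Q X₀ : Matrix (Fin n) (Fin n) ℝ) (R : Matrix (Fin m) (Fin m) ℝ)
    (hQ : Q.PosDef) (hR : R.PosDef) (hX₀ : X₀.PosDef)
    (hC : C.rank = n)
    (P S : Matrix (Fin m) (Fin n) ℝ → Matrix (Fin n) (Fin n) ℝ)
    (hP : ∀ K, specRad (A - B * K * C) < 1 → (P K).PosDef ∧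
      P K = Q + Cᵀ * Kᵀ * R * K * C + (A - B * K * C)ᵀ * P K * (A - B * K * C))
    (hS : ∀ K, specRad (A - B * K * C) < 1 → (S K).PosDef ∧
      S K = X₀ + (A - B * K * C) * S K * (A - B * K * C)ᵀ)
    (Kstar : Matrix (Fin m) (Fin n) ℝ)
    (hKstar : specRad (A - B * Kstar * C) < 1)
    (hmin : ∀ K, specRad (A - B * K * C) < 1 →
      (P Kstar * X₀).trace ≤ (P K * X₀).trace)
    (K : Matrix (Fin m) (Fin n) ℝ) (hK : specRad (A - B * K * C) < 1) :
    (P K * X₀).trace - (P Kstar * X₀).trace ≤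
      specNorm (S Kstar) *
        frobNorm ((2 : ℝ) •
          (((R + Bᵀ * P K * B) * K * C - Bᵀ * P K * A) * S K * Cᵀ)) ^ 2 /
        (4 * sigmaMin X₀ ^ 2 * sigmaMin C ^ 2 * lambdaMin R) := by
  classical
  rcases Nat.eq_zero_or_pos n with hn0 | hn
  · subst hn0
    have hL1 : (P K * X₀).trace = 0 := by simp [Matrix.trace]
    have hL2 : (P Kstar * X₀).trace = 0 := by simp [Matrix.trace]
    have hset : {v : EuclideanSpace ℝ (Fin 0) | ‖v‖ = 1} = ∅ := by
      ext v
      simp [EuclideanSpace.norm_eq]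
    have hσ0 : sigmaMin X₀ = 0 := by
      rw [sigmaMin, hset, Set.image_empty, Real.sInf_empty]
    rw [hL1, hL2, hσ0]
    norm_num
  · obtain ⟨hPKpd, e1⟩ := hP K hK
    obtain ⟨hPspd, e2⟩ := hP Kstar hKstar
    obtain ⟨hSKpd, eSK⟩ := hS K hK
    obtain ⟨hSgpd, eSg⟩ := hS Kstar hKstar
    have hPkT : (P K)ᵀ = P K := by
      have h := hPKpd.1
      rwa [Matrix.IsHermitian, conjTranspose_eq_transpose_of_trivial] at h
    have hRT : Rᵀ = R := by
      have h := hR.1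
      rwa [Matrix.IsHermitian, conjTranspose_eq_transpose_of_trivial] at h
    have hSKT : (S K)ᵀ = S K := by
      have h := hSKpd.1
      rwa [Matrix.IsHermitian, conjTranspose_eq_transpose_of_trivial] at h
    have hSgT : (S Kstar)ᵀ = S Kstar := by
      have h := hSgpd.1
      rwa [Matrix.IsHermitian, conjTranspose_eq_transpose_of_trivial] at h
    have step1 := step1_algebra A B C K Kstar Q R (P K) (P Kstar) hPkT hRT e1 e2
    set G := R + Bᵀ * P K * B with hG
    set Δ := Kstar * C - K * C with hΔ
    set E := G * K * C - Bᵀ * P K * A with hE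
    set M := Δᵀ * G * Δ + Δᵀ * E + Eᵀ * Δ with hM
    have step2 := step2_trace step1 eSg
    have hLHS : (P K * X₀).trace - (P Kstar * X₀).trace = -((M * S Kstar).trace) := by
      rw [step2, Matrix.sub_mul, Matrix.trace_sub]
      ring
    rw [hLHS]
    rcases Nat.eq_zero_or_pos m with hm0 | hm
    · subst hm0
      have hM0 : M = 0 := by
        rw [hM]
        ext i j
        simp [Matrix.mul_apply, Matrix.add_apply]
      have hnum : ((2:ℝ) • (E * S K * Cᵀ))ᵀ * ((2:ℝ) • (E * S K * Cᵀ)) = 0 := by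
        ext i j
        simp [Matrix.mul_apply]
      have h40 : frobNorm ((2:ℝ) • (E * S K * Cᵀ)) ^ 2 = 0 := by
        rw [frobNorm_sq, hnum, Matrix.trace_zero]
      rw [hM0, h40]
      simp
    · obtain ⟨hcpos, hcpsd⟩ := lambdaMin_facts hR hm
      obtain ⟨hμpos, hμpsd⟩ := sigmaMin_posdef_facts hX₀ hn
      obtain ⟨hσpos, hσpsd⟩ := sigmaMin_rank_facts hC hn
      have hGpsd : (G - lambdaMin R • 1).PosSemidef := by
        have hBPB : (Bᵀ * P K * B).PosSemidef := by
          have h := hPKpd.posSemidef.conjTranspose_mul_mul_same B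
          rwa [conjTranspose_eq_transpose_of_trivial] at h
        have heq : G - lambdaMin R • 1 = (R - lambdaMin R • 1) + Bᵀ * P K * B := by
          rw [hG]; abel
        rw [heq]
        exact hcpsd.add hBPB
      have hcompl : (M + (lambdaMin R)⁻¹ • (Eᵀ * E)).PosSemidef := by
        rw [hM]
        exact complsq Δ E G hcpos hGpsd
      have hEE : (Eᵀ * E).PosSemidef := psd_transpose_mul_self E
      have hTrEE : 0 ≤ (Eᵀ * E).trace := psd_trace_nonneg hEE
      have h0 : 0 ≤ ((M + (lambdaMin R)⁻¹ • (Eᵀ * E)) * S Kstar).trace :=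
        psd_trace_mul_nonneg hcompl hSgpd.posSemidef
      rw [Matrix.add_mul, Matrix.trace_add, Matrix.smul_mul, Matrix.trace_smul,
        smul_eq_mul] at h0
      have hb2 : ((Eᵀ * E) * S Kstar).trace ≤ specNorm (S Kstar) * (Eᵀ * E).trace :=
        trace_mul_le _ hEE (specNorm_smul_one_sub_psd hSgT)
      have hLHS2 : -((M * S Kstar).trace)
          ≤ (lambdaMin R)⁻¹ * (specNorm (S Kstar) * (Eᵀ * E).trace) := by
        have h1 : -((M * S Kstar).trace) ≤ (lambdaMin R)⁻¹ * ((Eᵀ * E * S Kstar).trace) := by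
          linarith
        exact h1.trans (mul_le_mul_of_nonneg_left hb2 (inv_nonneg.mpr hcpos.le))
      have hSKge : (S K - sigmaMin X₀ • 1).PosSemidef := by
        have hASA : ((A - B * K * C) * S K * (A - B * K * C)ᵀ).PosSemidef := by
          have h := hSKpd.posSemidef.mul_mul_conjTranspose_same (A - B * K * C)
          rwa [conjTranspose_eq_transpose_of_trivial] at h
        have heq : S K - sigmaMin X₀ • 1
            = (X₀ - sigmaMin X₀ • 1) + (A - B * K * C) * S K * (A - B * K * C)ᵀ := by
          conv_lhs => rw [eSK]
          abel
        rw [heq]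
        exact hμpsd.add hASA
      have hSK2 : (S K * S K - sigmaMin X₀ ^ 2 • 1).PosSemidef :=
        sq_psd hSKT hμpos.le hSKge
      have hNpsd : ((S K * Eᵀ) * (E * S K)).PosSemidef := by
        have h := psd_transpose_mul_self (E * S K)
        rwa [Matrix.transpose_mul, hSKT] at h
      have hT1 : ((E * S K * Cᵀ)ᵀ * (E * S K * Cᵀ)).trace
          = (((S K * Eᵀ) * (E * S K)) * (Cᵀ * C)).trace := by
        have e : ((E * S K * Cᵀ)ᵀ * (E * S K * Cᵀ)).trace
            = (C * ((S K * Eᵀ) * (E * (S K * Cᵀ)))).trace := by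
          rw [Matrix.transpose_mul, Matrix.transpose_mul, Matrix.transpose_transpose, hSKT]
          simp only [Matrix.mul_assoc]
        rw [e, Matrix.trace_mul_comm]
        simp only [Matrix.mul_assoc]
      have hb3a : sigmaMin C ^ 2 * ((S K * Eᵀ) * (E * S K)).trace
          ≤ (((S K * Eᵀ) * (E * S K)) * (Cᵀ * C)).trace :=
        trace_mul_ge _ hNpsd hσpsd
      have hTN : ((S K * Eᵀ) * (E * S K)).trace = ((Eᵀ * E) * (S K * S K)).trace := by
        simp only [Matrix.mul_assoc]
        rw [Matrix.trace_mul_comm (S K)]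
        simp only [Matrix.mul_assoc]
      have hb3b : sigmaMin X₀ ^ 2 * (Eᵀ * E).trace ≤ ((Eᵀ * E) * (S K * S K)).trace :=
        trace_mul_ge _ hEE hSK2
      have hTge : sigmaMin C ^ 2 * (sigmaMin X₀ ^ 2 * (Eᵀ * E).trace)
          ≤ ((E * S K * Cᵀ)ᵀ * (E * S K * Cᵀ)).trace := by
        calc sigmaMin C ^ 2 * (sigmaMin X₀ ^ 2 * (Eᵀ * E).trace)
            ≤ sigmaMin C ^ 2 * ((Eᵀ * E) * (S K * S K)).trace :=
              mul_le_mul_of_nonneg_left hb3b (sq_nonneg _)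
          _ = sigmaMin C ^ 2 * ((S K * Eᵀ) * (E * S K)).trace := by rw [hTN]
          _ ≤ (((S K * Eᵀ) * (E * S K)) * (Cᵀ * C)).trace := hb3a
          _ = ((E * S K * Cᵀ)ᵀ * (E * S K * Cᵀ)).trace := hT1.symm
      have hfrob : frobNorm ((2:ℝ) • (E * S K * Cᵀ)) ^ 2
          = 4 * ((E * S K * Cᵀ)ᵀ * (E * S K * Cᵀ)).trace := by
        rw [frobNorm_sq, Matrix.transpose_smul, Matrix.smul_mul, Matrix.mul_smul, smul_smul,
          Matrix.trace_smul, smul_eq_mul]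
        norm_num
      rw [hfrob]
      have hdpos : 0 < 4 * sigmaMin X₀ ^ 2 * sigmaMin C ^ 2 * lambdaMin R := by positivity
      rw [le_div_iff₀ hdpos]
      have hsnn : 0 ≤ specNorm (S Kstar) := norm_nonneg _
      have hc1 : (lambdaMin R)⁻¹ * lambdaMin R = 1 := inv_mul_cancel₀ hcpos.ne'
      have hstep : -((M * S Kstar).trace) * (4 * sigmaMin X₀ ^ 2 * sigmaMin C ^ 2 * lambdaMin R)
          ≤ ((lambdaMin R)⁻¹ * (specNorm (S Kstar) * (Eᵀ * E).trace))
            * (4 * sigmaMin X₀ ^ 2 * sigmaMin C ^ 2 * lambdaMin R) :=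
        mul_le_mul_of_nonneg_right hLHS2 hdpos.le
      have hfin : ((lambdaMin R)⁻¹ * (specNorm (S Kstar) * (Eᵀ * E).trace))
            * (4 * sigmaMin X₀ ^ 2 * sigmaMin C ^ 2 * lambdaMin R)
          ≤ specNorm (S Kstar) * (4 * ((E * S K * Cᵀ)ᵀ * (E * S K * Cᵀ)).trace) := by
        have h4s := mul_le_mul_of_nonneg_left hTge (mul_nonneg (by norm_num : (0:ℝ) ≤ 4) hsnn)
        calc ((lambdaMin R)⁻¹ * (specNorm (S Kstar) * (Eᵀ * E).trace))
              * (4 * sigmaMin X₀ ^ 2 * sigmaMin C ^ 2 * lambdaMin R)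
            = ((lambdaMin R)⁻¹ * lambdaMin R) *
              ((4 * specNorm (S Kstar)) * (sigmaMin C ^ 2 * (sigmaMin X₀ ^ 2 * (Eᵀ * E).trace))) := by
              ring
          _ = (4 * specNorm (S Kstar)) * (sigmaMin C ^ 2 * (sigmaMin X₀ ^ 2 * (Eᵀ * E).trace)) := by
              rw [hc1, one_mul]
          _ ≤ (4 * specNorm (S Kstar)) * ((E * S K * Cᵀ)ᵀ * (E * S K * Cᵀ)).trace := h4s
          _ = specNorm (S Kstar) * (4 * ((E * S K * Cᵀ)ᵀ * (E * S K * Cᵀ)).trace) := by ring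
      exact hstep.trans hfin
end
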